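/- Let 1 ≤ p < ∞ and suppose ∑_{k=1}^n a_k|d_k|^p < 1. Then there exists a unique f ∈ L_p[0,1] satisfying G(f) = f. -/

import Mathlib

open MeasureTheory Set Filter
open scoped ENNReal NNReal

/-- Breakpoints: `alphaOf a k = α_k = ∑_{i=1}^{k-1} a_i`, so `α_1 = 0`. -/
noncomputable def alphaOf (a : ℕ → ℝ) (k : ℕ) : ℝ := ∑ i ∈ Finset.Ico 1 k, a i

/-- The similarity operator `G`: on `(α_k, α_{k+1})` it takes the value
`β_k + d_k · f((x − α_k)/a_k)`, and `0` outside `⋃ (α_k, α_{k+1})`. -/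
noncomputable def simOp (n : ℕ) (a d β : ℕ → ℝ) (f : ℝ → ℝ) : ℝ → ℝ :=
  fun x => ∑ k ∈ Finset.Icc 1 n,
    Set.indicator (Set.Ioo (alphaOf a k) (alphaOf a (k + 1)))
      (fun y => β k + d k * f ((y - alphaOf a k) / a k)) x

/-!
Rescaling the piece `(α_k, α_{k+1})` affinely onto `(0,1)` multiplies Lebesgue measure by `a_k`,
and `G f - G g` is `d_k (f - g)` rescaled on the `k`-th piece; hence
`‖G f - G g‖_p ^ p = (∑ a_k |d_k| ^ p) ‖f - g‖_p ^ p`. So `G` is a strict contraction of the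
Banach space `L_p[0,1]`, and the Banach fixed point theorem gives a fixed point, unique up to
a.e. equality.
-/

section FixedPoint

variable {α E : Type*} [MeasurableSpace α] {μ : Measure α} [NormedAddCommGroup E]
  [CompleteSpace E] {p : ℝ≥0∞} [Fact (1 ≤ p)]

theorem exists_unique_ae_fixedPoint_of_eLpNorm_sub_le (Φ : (α → E) → α → E) {K : ℝ≥0∞}
    (hK : K < 1) (hmem : ∀ f, MemLp f p μ → MemLp (Φ f) p μ)
    (hlip : ∀ f g, MemLp f p μ → MemLp g p μ →
      eLpNorm (Φ f - Φ g) p μ ≤ K * eLpNorm (f - g) p μ) :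
    ∃ f, MemLp f p μ ∧ f =ᵐ[μ] Φ f ∧ ∀ g, MemLp g p μ → g =ᵐ[μ] Φ g → g =ᵐ[μ] f := by
  have hΦ_congr : ∀ f g, MemLp f p μ → MemLp g p μ → f =ᵐ[μ] g → Φ f =ᵐ[μ] Φ g := by
    intro f g hf hg hfg
    have hp0 : p ≠ 0 := (zero_lt_one.trans_le Fact.out).ne'
    rw [eventuallyEq_iff_sub, ← eLpNorm_eq_zero_iff ((hmem f hf).1.sub (hmem g hg).1) hp0]
    refine le_antisymm ?_ bot_le
    simpa [eLpNorm_congr_ae hfg.sub_eq] using hlip f g hf hg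
  let T : Lp E p μ → Lp E p μ := fun F => (hmem F (Lp.memLp F)).toLp
  have hT : ∀ F, (T F : α → E) =ᵐ[μ] Φ F := fun F => MemLp.coeFn_toLp _
  have hKK : ((K.toNNReal : ℝ≥0) : ℝ≥0∞) = K :=
    ENNReal.coe_toNNReal (hK.trans ENNReal.one_lt_top).ne
  have hcontr : ContractingWith K.toNNReal T := by
    refine ⟨by rwa [← ENNReal.coe_lt_one_iff, hKK], fun F G => ?_⟩
    rw [Lp.edist_def, Lp.edist_def, hKK, eLpNorm_congr_ae ((hT F).sub (hT G))]
    exact hlip _ _ (Lp.memLp F) (Lp.memLp G)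
  refine ⟨(hcontr.fixedPoint T : Lp E p μ), Lp.memLp _, ?_, fun g hg hgΦ => ?_⟩
  · conv_lhs => rw [← hcontr.fixedPoint_isFixedPt]
    exact hT _
  · have hG : T (hg.toLp g) = hg.toLp g := by
      rw [MemLp.toLp_eq_toLp_iff _ hg]
      exact (hΦ_congr _ _ (Lp.memLp _) hg (MemLp.coeFn_toLp hg)).trans hgΦ.symm
    rw [← hcontr.fixedPoint_unique hG]
    exact (MemLp.coeFn_toLp hg).symm

end FixedPoint

section AffineRescaling

variable {t c : ℝ}

theorem map_sub_div_volume_restrict_Ioo (hc : 0 < c) :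
    Measure.map (fun x => (x - t) / c) (volume.restrict (Ioo t (t + c))) =
      ENNReal.ofReal c • volume.restrict (Icc (0:ℝ) 1) := by
  have hpre : (fun x : ℝ => (x - t) / c) ⁻¹' Ioo 0 1 = Ioo t (t + c) := by
    ext x
    simp only [mem_preimage, mem_Ioo, lt_div_iff₀ hc, div_lt_one hc]
    constructor <;> intro h <;> constructor <;> linarith [h.1, h.2]
  have hcomp : (fun x : ℝ => (x - t) / c) = (fun y => c⁻¹ * y) ∘ (· + -t) := by
    funext x
    simp only [Function.comp_apply]
    ring
  rw [← Measure.restrict_congr_set Ioo_ae_eq_Icc, ← hpre,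
    ← Measure.restrict_map (by fun_prop) measurableSet_Ioo, hcomp,
    ← Measure.map_map (by fun_prop) (by fun_prop), map_add_right_eq_self,
    Real.map_volume_mul_left (inv_ne_zero hc.ne'), inv_inv, abs_of_pos hc,
    Measure.restrict_smul]

theorem measurableEmbedding_sub_div (hc : c ≠ 0) :
    MeasurableEmbedding (fun x : ℝ => (x - t) / c) :=
  (affineHomeomorph c t hc).symm.measurableEmbedding

theorem quasiMeasurePreserving_sub_div (hc : 0 < c) :
    Measure.QuasiMeasurePreserving (fun x => (x - t) / c) (volume.restrict (Ioo t (t + c)))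
      (volume.restrict (Icc (0:ℝ) 1)) :=
  ⟨by fun_prop, by rw [map_sub_div_volume_restrict_Ioo hc]; exact Measure.smul_absolutelyContinuous⟩

theorem setLIntegral_Ioo_comp_sub_div (hc : 0 < c) (φ : ℝ → ℝ≥0∞) :
    ∫⁻ x in Ioo t (t + c), φ ((x - t) / c) =
      ENNReal.ofReal c * ∫⁻ y in Icc (0:ℝ) 1, φ y := by
  rw [← (measurableEmbedding_sub_div hc.ne').lintegral_map, map_sub_div_volume_restrict_Ioo hc,
    lintegral_smul_measure, smul_eq_mul]

end AffineRescaling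

section Partition

variable {n k : ℕ} {a : ℕ → ℝ}

theorem alphaOf_succ (a : ℕ → ℝ) (hk : 1 ≤ k) : alphaOf a (k + 1) = alphaOf a k + a k := by
  simp [alphaOf, Finset.sum_Ico_succ_top hk]

theorem alphaOf_succ_eq_sum (a : ℕ → ℝ) (n : ℕ) :
    alphaOf a (n + 1) = ∑ k ∈ Finset.Icc 1 n, a k := by
  rw [alphaOf, Finset.Ico_add_one_right_eq_Icc]

theorem alphaOf_mono (ha : ∀ k ∈ Finset.Icc 1 n, 0 < a k) {i j : ℕ} (hij : i ≤ j)
    (hj : j ≤ n + 1) : alphaOf a i ≤ alphaOf a j := by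
  refine Finset.sum_le_sum_of_subset_of_nonneg (Finset.Ico_subset_Ico le_rfl hij) ?_
  intro l hl _
  rw [Finset.mem_Ico] at hl
  exact (ha l (Finset.mem_Icc.mpr ⟨hl.1, by omega⟩)).le

theorem pairwiseDisjoint_Ioo_alphaOf (ha : ∀ k ∈ Finset.Icc 1 n, 0 < a k) :
    (Finset.Icc 1 n : Set ℕ).PairwiseDisjoint
      fun k => Ioo (alphaOf a k) (alphaOf a (k + 1)) := by
  have key : ∀ i j, j ≤ n → i < j →
      Disjoint (Ioo (alphaOf a i) (alphaOf a (i + 1))) (Ioo (alphaOf a j) (alphaOf a (j + 1))) :=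
    fun i j hj hij => Set.disjoint_left.mpr fun x hxi hxj =>
      lt_asymm (hxi.2.trans_le (alphaOf_mono ha hij (by omega))) hxj.1
  intro i hi j hj hij
  simp only [Finset.coe_Icc, mem_Icc] at hi hj
  rcases hij.lt_or_gt with h | h
  · exact key i j hj.2 h
  · exact (key j i hi.2 h).symm

theorem biUnion_Ioo_alphaOf_ae_eq_Icc (ha : ∀ k ∈ Finset.Icc 1 n, 0 < a k)
    (hsum : ∑ k ∈ Finset.Icc 1 n, a k = 1) :
    ⋃ k ∈ Finset.Icc 1 n, Ioo (alphaOf a k) (alphaOf a (k + 1)) =ᵐ[volume] Icc (0:ℝ) 1 := by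
  have hsub : ⋃ k ∈ Finset.Icc 1 n, Ioo (alphaOf a k) (alphaOf a (k + 1)) ⊆ Icc 0 1 := by
    simp only [iUnion_subset_iff, Finset.mem_Icc]
    intro k hk x hx
    have h0 : alphaOf a 0 ≤ alphaOf a k := alphaOf_mono ha k.zero_le (by omega)
    have h1 : alphaOf a (k + 1) ≤ alphaOf a (n + 1) := alphaOf_mono ha (by omega) le_rfl
    rw [show alphaOf a 0 = 0 by simp [alphaOf]] at h0
    rw [alphaOf_succ_eq_sum a n, hsum] at h1
    exact ⟨by linarith [hx.1], by linarith [hx.2]⟩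
  have hvol : volume (⋃ k ∈ Finset.Icc 1 n, Ioo (alphaOf a k) (alphaOf a (k + 1))) = 1 := by
    rw [measure_biUnion_finset (pairwiseDisjoint_Ioo_alphaOf ha) fun k _ => measurableSet_Ioo,
      ← ENNReal.ofReal_one, ← hsum, ENNReal.ofReal_sum_of_nonneg fun k hk => (ha k hk).le]
    refine Finset.sum_congr rfl fun k hk => ?_
    rw [Real.volume_Ioo, alphaOf_succ a (Finset.mem_Icc.mp hk).1, add_sub_cancel_left]
  refine ae_eq_of_subset_of_measure_ge hsub ?_ ?_ (by simp)
  · rw [hvol, Real.volume_Icc, sub_zero, ENNReal.ofReal_one]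
  · exact (Finset.measurableSet_biUnion _ fun k _ => measurableSet_Ioo).nullMeasurableSet

end Partition

section SimOp

variable {n : ℕ} {a : ℕ → ℝ} (d β : ℕ → ℝ)

theorem simOp_eq_of_mem_Ioo (ha : ∀ k ∈ Finset.Icc 1 n, 0 < a k) (f : ℝ → ℝ) {k : ℕ}
    (hk : k ∈ Finset.Icc 1 n) {x : ℝ} (hx : x ∈ Ioo (alphaOf a k) (alphaOf a (k + 1))) :
    simOp n a d β f x = β k + d k * f ((x - alphaOf a k) / a k) := by
  rw [simOp, Finset.sum_eq_single_of_mem k hk fun j hj hjk => indicator_of_notMem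
    (Set.disjoint_right.mp (pairwiseDisjoint_Ioo_alphaOf ha hj hk hjk) hx) _]
  exact indicator_of_mem hx _

theorem simOp_sub (f g : ℝ → ℝ) :
    simOp n a d β f - simOp n a d β g = simOp n a d 0 (f - g) := by
  funext x
  simp only [simOp, Pi.sub_apply, ← Finset.sum_sub_distrib]
  refine Finset.sum_congr rfl fun k _ => ?_
  by_cases hx : x ∈ Ioo (alphaOf a k) (alphaOf a (k + 1))
  · simp only [indicator_of_mem hx, Pi.zero_apply]
    ring
  · simp only [indicator_of_notMem hx, sub_zero]

theorem setLIntegral_Icc_simOp (ha : ∀ k ∈ Finset.Icc 1 n, 0 < a k)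
    (hsum : ∑ k ∈ Finset.Icc 1 n, a k = 1) (φ : ℝ → ℝ≥0∞) (f : ℝ → ℝ) :
    ∫⁻ x in Icc 0 1, φ (simOp n a d β f x) =
      ∑ k ∈ Finset.Icc 1 n, ENNReal.ofReal (a k) * ∫⁻ y in Icc 0 1, φ (β k + d k * f y) := by
  calc ∫⁻ x in Icc 0 1, φ (simOp n a d β f x)
      = ∑ k ∈ Finset.Icc 1 n, ∫⁻ x in Ioo (alphaOf a k) (alphaOf a (k + 1)),
          φ (simOp n a d β f x) := by
        rw [← Measure.restrict_congr_set (biUnion_Ioo_alphaOf_ae_eq_Icc ha hsum),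
          lintegral_biUnion_finset (pairwiseDisjoint_Ioo_alphaOf ha) fun k _ => measurableSet_Ioo]
    _ = _ := by
      refine Finset.sum_congr rfl fun k hk => ?_
      rw [setLIntegral_congr_fun measurableSet_Ioo fun x hx => by
        rw [simOp_eq_of_mem_Ioo d β ha f hk hx], alphaOf_succ a (Finset.mem_Icc.mp hk).1]
      exact setLIntegral_Ioo_comp_sub_div (ha k hk) fun y => φ (β k + d k * f y)

theorem aestronglyMeasurable_simOp (ha : ∀ k ∈ Finset.Icc 1 n, 0 < a k) {f : ℝ → ℝ}
    (hf : AEStronglyMeasurable f (volume.restrict (Icc 0 1))) :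
    AEStronglyMeasurable (simOp n a d β f) volume := by
  refine Finset.aestronglyMeasurable_fun_sum _ fun k hk => ?_
  rw [aestronglyMeasurable_indicator_iff measurableSet_Ioo, alphaOf_succ a (Finset.mem_Icc.mp hk).1]
  exact aestronglyMeasurable_const.add
    ((hf.comp_quasiMeasurePreserving (quasiMeasurePreserving_sub_div (ha k hk))).const_mul (d k))

theorem memLp_simOp (ha : ∀ k ∈ Finset.Icc 1 n, 0 < a k) (hsum : ∑ k ∈ Finset.Icc 1 n, a k = 1)
    {p : ℝ≥0∞} (hp : p ≠ ⊤) {f : ℝ → ℝ} (hf : MemLp f p (volume.restrict (Icc 0 1))) :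
    MemLp (simOp n a d β f) p (volume.restrict (Icc 0 1)) := by
  refine ⟨(aestronglyMeasurable_simOp d β ha hf.1).restrict, ?_⟩
  rcases eq_or_ne p 0 with rfl | hp0
  · simp
  rw [eLpNorm_lt_top_iff_lintegral_rpow_enorm_lt_top hp0 hp,
    setLIntegral_Icc_simOp d β ha hsum (fun y => ‖y‖ₑ ^ p.toReal)]
  refine ENNReal.sum_lt_top.mpr fun k _ => ENNReal.mul_lt_top ENNReal.ofReal_lt_top ?_
  exact (eLpNorm_lt_top_iff_lintegral_rpow_enorm_lt_top hp0 hp).mp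
    ((memLp_const (β k)).add (hf.const_mul (d k))).2

theorem eLpNorm_simOp_zero (ha : ∀ k ∈ Finset.Icc 1 n, 0 < a k)
    (hsum : ∑ k ∈ Finset.Icc 1 n, a k = 1) {p : ℝ≥0∞} (hp0 : p ≠ 0) (hp : p ≠ ⊤) (h : ℝ → ℝ) :
    eLpNorm (simOp n a d 0 h) p (volume.restrict (Icc 0 1)) =
      ENNReal.ofReal (∑ k ∈ Finset.Icc 1 n, a k * |d k| ^ p.toReal) ^ (1 / p.toReal) *
        eLpNorm h p (volume.restrict (Icc 0 1)) := by
  have hq : 0 < p.toReal := ENNReal.toReal_pos hp0 hp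
  rw [eLpNorm_eq_lintegral_rpow_enorm_toReal hp0 hp, eLpNorm_eq_lintegral_rpow_enorm_toReal hp0 hp,
    ← ENNReal.mul_rpow_of_nonneg _ _ (by positivity),
    setLIntegral_Icc_simOp d 0 ha hsum (fun y => ‖y‖ₑ ^ p.toReal),
    ENNReal.ofReal_sum_of_nonneg fun k hk => mul_nonneg (ha k hk).le (by positivity),
    Finset.sum_mul]
  congr 1
  refine Finset.sum_congr rfl fun k hk => ?_
  simp_rw [Pi.zero_apply, zero_add, enorm_mul, ENNReal.mul_rpow_of_nonneg _ _ hq.le]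
  rw [lintegral_const_mul' _ _ (by finiteness), ← mul_assoc, ENNReal.ofReal_mul (ha k hk).le,
    Real.enorm_eq_ofReal_abs, ENNReal.ofReal_rpow_of_nonneg (abs_nonneg _) hq.le]

end SimOp

theorem simOp_exists_unique_fixedPoint_general (n : ℕ) (a d β : ℕ → ℝ)
    (ha : ∀ k ∈ Finset.Icc 1 n, 0 < a k)
    (hsum : ∑ k ∈ Finset.Icc 1 n, a k = 1)
    (p : ℝ≥0∞) (hp1 : 1 ≤ p) (hpt : p ≠ ⊤)
    (hcontr : ∑ k ∈ Finset.Icc 1 n, a k * |d k| ^ p.toReal < 1) :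
    ∃ f : ℝ → ℝ, MemLp f p (volume.restrict (Set.Icc (0:ℝ) 1)) ∧
      f =ᵐ[volume.restrict (Set.Icc (0:ℝ) 1)] simOp n a d β f ∧
      ∀ g : ℝ → ℝ, MemLp g p (volume.restrict (Set.Icc (0:ℝ) 1)) →
        g =ᵐ[volume.restrict (Set.Icc (0:ℝ) 1)] simOp n a d β g →
        g =ᵐ[volume.restrict (Set.Icc (0:ℝ) 1)] f := by
  have : Fact (1 ≤ p) := ⟨hp1⟩
  have hp0 : p ≠ 0 := (zero_lt_one.trans_le hp1).ne'
  have hq : 0 < 1 / p.toReal := one_div_pos.mpr (ENNReal.toReal_pos hp0 hpt)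
  refine exists_unique_ae_fixedPoint_of_eLpNorm_sub_le (simOp n a d β)
    (ENNReal.rpow_lt_one (ENNReal.ofReal_lt_one.mpr hcontr) hq)
    (fun f hf => memLp_simOp d β ha hsum hpt hf) fun f g _ _ => ?_
  rw [simOp_sub, eLpNorm_simOp_zero d ha hsum hp0 hpt]

/-- if `1 ≤ p < ∞` and `∑ a_k |d_k|^p < 1`, then there is a unique (up to
a.e. equality) function `f ∈ L_p[0,1]` with `G(f) = f`. -/
theorem simOp_exists_unique_fixedPoint (n : ℕ) (hn : 1 < n) (a d β : ℕ → ℝ)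
    (ha : ∀ k ∈ Finset.Icc 1 n, 0 < a k)
    (hsum : ∑ k ∈ Finset.Icc 1 n, a k = 1)
    (p : ℝ≥0∞) (hp1 : 1 ≤ p) (hpt : p ≠ ⊤)
    (hcontr : ∑ k ∈ Finset.Icc 1 n, a k * |d k| ^ p.toReal < 1) :
    ∃ f : ℝ → ℝ, MemLp f p (volume.restrict (Set.Icc (0:ℝ) 1)) ∧
      f =ᵐ[volume.restrict (Set.Icc (0:ℝ) 1)] simOp n a d β f ∧
      ∀ g : ℝ → ℝ, MemLp g p (volume.restrict (Set.Icc (0:ℝ) 1)) →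
        g =ᵐ[volume.restrict (Set.Icc (0:ℝ) 1)] simOp n a d β g →
        g =ᵐ[volume.restrict (Set.Icc (0:ℝ) 1)] f :=
  simOp_exists_unique_fixedPoint_general n a d β ha hsum p hp1 hpt hcontr
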